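/- For all dotted compositions α and β, with fermionic degrees m_α and m_β respectively, and every N, the monomial quasisymmetric functions in superspace supercommute in A_N: M_α · M_β = (−1)^{m_α · m_β} M_β · M_α. (This expresses the commutativity, in the graded/super sense, of the algebra sQSym of quasisymmetric functions in superspace.) -/
import Mathlib

open TensorProduct

set_option synthInstance.maxHeartbeats 1000000
set_option maxHeartbeats 1000000

noncomputable section

/-- The ring of polynomials in superspace in `N` variables. -/
abbrev SuperAlg (N : ℕ) : Type :=
  MvPolynomial (Fin N) ℚ ⊗[ℚ] ExteriorAlgebra ℚ (Fin N → ℚ)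

/-- The (bosonic) variable `x_i`. -/
def sx {N : ℕ} (i : Fin N) : SuperAlg N := MvPolynomial.X i ⊗ₜ[ℚ] 1

/-- The (fermionic) variable `θ_i`. -/
def sθ {N : ℕ} (i : Fin N) : SuperAlg N :=
  1 ⊗ₜ[ℚ] ExteriorAlgebra.ι ℚ (Pi.single i 1)

/-- A dotted composition is a list of parts `(a, η)` where `η = true` marks a dotted part,
and undotted parts must be positive. -/
def IsDottedComp (α : List (ℕ × Bool)) : Prop :=
  ∀ p ∈ α, p.2 = false → 1 ≤ p.1

def Mqs {N : ℕ} (α : List (ℕ × Bool)) (B : Finset (Fin N)) : SuperAlg N :=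
  ∑ S ∈ B.powersetCard α.length,
    (List.zipWith (fun i p => (if p.2 then sθ i else 1) * sx i ^ p.1)
      (S.sort (· ≤ ·)) α).prod

def fermDeg (α : List (ℕ × Bool)) : ℕ := α.countP (fun p => p.2 = true)

/-- Product of `ι`'s of a list of vectors. -/
def Pι {N : ℕ} (l : List (Fin N → ℚ)) : ExteriorAlgebra ℚ (Fin N → ℚ) :=
  (l.map (ExteriorAlgebra.ι ℚ)).prod

lemma Pι_nil {N : ℕ} : Pι ([] : List (Fin N → ℚ)) = 1 := rfl

lemma Pι_cons {N : ℕ} (v : Fin N → ℚ) (l : List (Fin N → ℚ)) :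
    Pι (v :: l) = ExteriorAlgebra.ι ℚ v * Pι l := by
  simp [Pι]

lemma ι_mul_Pι {N : ℕ} (v : Fin N → ℚ) (l : List (Fin N → ℚ)) :
    ExteriorAlgebra.ι ℚ v * Pι l
      = ((-1 : ℤ) ^ l.length) • (Pι l * ExteriorAlgebra.ι ℚ v) := by
  induction l with
  | nil => simp [Pι_nil]
  | cons w l ih =>
    have h : ExteriorAlgebra.ι ℚ v * ExteriorAlgebra.ι ℚ w
        = -(ExteriorAlgebra.ι ℚ w * ExteriorAlgebra.ι ℚ v) :=
      eq_neg_of_add_eq_zero_left (ExteriorAlgebra.ι_add_mul_swap v w)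
    rw [Pι_cons, ← mul_assoc, h, neg_mul, mul_assoc, ih, mul_smul_comm,
      List.length_cons, pow_succ, mul_neg_one, ← neg_smul, mul_assoc]

lemma Pι_mul_Pι {N : ℕ} (l1 l2 : List (Fin N → ℚ)) :
    Pι l1 * Pι l2 = ((-1 : ℤ) ^ (l1.length * l2.length)) • (Pι l2 * Pι l1) := by
  induction l1 with
  | nil => simp [Pι_nil]
  | cons v l1 ih =>
    rw [Pι_cons, mul_assoc, ih, mul_smul_comm, ← mul_assoc, ι_mul_Pι, smul_mul_assoc,
      smul_smul, List.length_cons, add_mul, one_mul, pow_add, mul_comm ((-1:ℤ)^_),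
      mul_assoc, ← Pι_cons]

lemma term_form {N : ℕ} (α : List (ℕ × Bool)) (is : List (Fin N)) (h : is.length = α.length) :
    ∃ (p : MvPolynomial (Fin N) ℚ) (l : List (Fin N → ℚ)),
      l.length = fermDeg α ∧
      (List.zipWith (fun i p => (if p.2 then sθ i else 1) * sx i ^ p.1) is α).prod
        = p ⊗ₜ[ℚ] Pι l := by
  induction α generalizing is with
  | nil =>
    exact ⟨1, [], by simp [fermDeg], by simp [Pι_nil, Algebra.TensorProduct.one_def]⟩
  | cons a α ih =>
    cases is with
    | nil => simp at h
    | cons i is =>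
      obtain ⟨p, l, hl, hp⟩ := ih is (by simpa using h)
      cases ha : a.2 with
      | false =>
        refine ⟨MvPolynomial.X i ^ a.1 * p, l, ?_, ?_⟩
        · simp [fermDeg, List.countP_cons, ha] at hl ⊢; omega
        · rw [List.zipWith_cons_cons, List.prod_cons, hp, ha]
          simp [sx, Algebra.TensorProduct.tmul_pow, Algebra.TensorProduct.tmul_mul_tmul]
      | true =>
        refine ⟨MvPolynomial.X i ^ a.1 * p, Pi.single i 1 :: l, ?_, ?_⟩
        · simp [fermDeg, List.countP_cons, ha] at hl ⊢; omega
        · rw [List.zipWith_cons_cons, List.prod_cons, hp, ha]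
          simp [sθ, sx, Algebra.TensorProduct.tmul_pow,
            Algebra.TensorProduct.tmul_mul_tmul, Pι_cons]

lemma pure_comm {N : ℕ} (p q : MvPolynomial (Fin N) ℚ) (l1 l2 : List (Fin N → ℚ)) :
    (p ⊗ₜ[ℚ] Pι l1) * (q ⊗ₜ[ℚ] Pι l2)
      = ((-1 : ℤ) ^ (l1.length * l2.length)) • ((q ⊗ₜ[ℚ] Pι l2) * (p ⊗ₜ[ℚ] Pι l1)) := by
  rw [Algebra.TensorProduct.tmul_mul_tmul, Algebra.TensorProduct.tmul_mul_tmul,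
    Pι_mul_Pι, tmul_smul, mul_comm q p]

theorem Mqs_supercommute (α β : List (ℕ × Bool))
    (hα : IsDottedComp α) (hβ : IsDottedComp β) (N : ℕ) :
    Mqs α (Finset.univ : Finset (Fin N)) * Mqs β Finset.univ
      = ((-1 : ℤ) ^ (fermDeg α * fermDeg β)) •
          (Mqs β (Finset.univ : Finset (Fin N)) * Mqs α Finset.univ) := by
  rw [Mqs, Mqs, Finset.sum_mul_sum, Finset.sum_mul_sum]
  simp only [Finset.smul_sum]
  conv_rhs => rw [Finset.sum_comm]
  refine Finset.sum_congr rfl fun S hS => Finset.sum_congr rfl fun T hT => ?_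
  obtain ⟨pS, lS, hlS, heS⟩ := term_form α (S.sort (· ≤ ·))
    (by rw [Finset.length_sort, (Finset.mem_powersetCard.mp hS).2])
  obtain ⟨pT, lT, hlT, heT⟩ := term_form β (T.sort (· ≤ ·))
    (by rw [Finset.length_sort, (Finset.mem_powersetCard.mp hT).2])
  rw [heS, heT, pure_comm, hlS, hlT]

end
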